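/- Every ReLU MLP f without biases can be written as a GLAI model: there exist, for each output coordinate i, finitely many contribution functions c_{1,i},...,c_{P_i,i} (each of the form x ↦ ind(x)·x_{r} for some input coordinate r and indicator ind taking values in {0,1}) and weights ω_{1,i},...,ω_{P_i,i} such that f(x)_i = Σ_{p=1}^{P_i} ω_{p,i} c_{p,i}(x) for all x ∈ ℝ^{n_0}. -/
import Mathlib


open Matrix

/-- Componentwise ReLU. -/
noncomputable def relu {n : ℕ} (v : Fin n → ℝ) : Fin n → ℝ := fun i => max 0 (v i)

/-- Intermediate maps of a bias-free ReLU MLP. -/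
noncomputable def mlpF (n : ℕ → ℕ) (W : ∀ l : ℕ, Matrix (Fin (n (l+1))) (Fin (n l)) ℝ) :
    (l : ℕ) → (Fin (n 0) → ℝ) → (Fin (n (l+1)) → ℝ)
  | 0, x => W 0 *ᵥ x
  | (l+1), x => W (l+1) *ᵥ relu (mlpF n W l x)

/-- Auxiliary predicate: `g` is a GLAI-representable scalar function. -/
def GLAIRep {m : ℕ} (g : (Fin m → ℝ) → ℝ) : Prop :=
  ∃ (P : ℕ) (r : Fin P → Fin m) (ind : Fin P → (Fin m → ℝ) → ℝ) (ω : Fin P → ℝ),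
    (∀ p x, ind p x = 0 ∨ ind p x = 1) ∧
    (∀ x, g x = ∑ p : Fin P, ω p * (ind p x * x (r p)))

lemma rep_coord {m : ℕ} (j : Fin m) : GLAIRep (fun x => x j) := by
  refine ⟨1, fun _ => j, fun _ _ => 1, fun _ => 1, fun _ _ => Or.inr rfl, fun x => ?_⟩
  simp

lemma rep_lin {m k : ℕ} (a : Fin k → ℝ) (g : Fin k → (Fin m → ℝ) → ℝ)
    (hg : ∀ j, GLAIRep (g j)) : GLAIRep (fun x => ∑ j, a j * g j x) := by
  choose P r ind ω h1 h2 using hg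
  let e := (Fintype.equivFin (Σ j : Fin k, Fin (P j))).symm
  refine ⟨Fintype.card (Σ j : Fin k, Fin (P j)),
    fun p => r (e p).1 (e p).2, fun p => ind (e p).1 (e p).2,
    fun p => a (e p).1 * ω (e p).1 (e p).2, fun p x => h1 _ _ _, fun x => ?_⟩
  show ∑ j, a j * g j x = ∑ p, a (e p).1 * ω (e p).1 (e p).2 * (ind (e p).1 (e p).2 x * x (r (e p).1 (e p).2))
  rw [e.sum_comp (fun q => a q.1 * ω q.1 q.2 * (ind q.1 q.2 x * x (r q.1 q.2)))]
  rw [← Finset.univ_sigma_univ, Finset.sum_sigma]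
  refine Finset.sum_congr rfl fun j _ => ?_
  rw [h2 j x, Finset.mul_sum]
  exact Finset.sum_congr rfl fun p _ => by ring

lemma rep_relu {m : ℕ} (g : (Fin m → ℝ) → ℝ) (hg : GLAIRep g) :
    GLAIRep (fun x => max 0 (g x)) := by
  obtain ⟨P, r, ind, ω, h1, h2⟩ := hg
  refine ⟨P, r, fun p x => (if 0 < g x then (1:ℝ) else 0) * ind p x, ω,
    fun p x => ?_, fun x => ?_⟩
  · by_cases hgx : 0 < g x <;> rcases h1 p x with h | h <;> simp [h, hgx]
  · show max 0 (g x) = _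
    set c := (if 0 < g x then (1:ℝ) else 0) with hc
    have hs : max 0 (g x) = c * g x := by
      rw [hc]; split <;> rename_i h
      · rw [max_eq_right h.le, one_mul]
      · rw [max_eq_left (le_of_not_gt h), zero_mul]
    rw [hs, h2 x, Finset.mul_sum]
    exact Finset.sum_congr rfl fun p _ => by ring

lemma rep_mlp (n : ℕ → ℕ) (W : ∀ l : ℕ, Matrix (Fin (n (l+1))) (Fin (n l)) ℝ) :
    ∀ (L : ℕ) (i : Fin (n (L+1))), GLAIRep (fun x => mlpF n W L x i) := by
  intro L
  induction L with
  | zero =>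
      intro i
      have : (fun x => mlpF n W 0 x i) = fun x => ∑ j, W 0 i j * x j := by
        funext x; simp [mlpF, Matrix.mulVec, dotProduct]
      rw [this]
      exact rep_lin _ _ fun j => rep_coord j
  | succ L ih =>
      intro i
      have : (fun x => mlpF n W (L+1) x i)
          = fun x => ∑ j, W (L+1) i j * max 0 (mlpF n W L x j) := by
        funext x; simp [mlpF, Matrix.mulVec, dotProduct, relu]
      rw [this]
      exact rep_lin _ _ fun j => rep_relu _ (ih j)

/-- Every bias-free ReLU MLP can be written as a GLAI model: for each output
coordinate `i` there are finitely many contribution functions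
`x ↦ ind(x) · x_r` (with `ind` taking values in `{0,1}` and `r` a fixed input
coordinate) and weights, whose weighted sum equals `f(x)_i` for all `x`. -/
theorem stmt15 (L : ℕ) (n : ℕ → ℕ) (W : ∀ l : ℕ, Matrix (Fin (n (l+1))) (Fin (n l)) ℝ) :
    ∃ (P : Fin (n (L+1)) → ℕ)
      (r : ∀ i : Fin (n (L+1)), Fin (P i) → Fin (n 0))
      (ind : ∀ i : Fin (n (L+1)), Fin (P i) → (Fin (n 0) → ℝ) → ℝ)
      (ω : ∀ i : Fin (n (L+1)), Fin (P i) → ℝ),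
      (∀ i p x, ind i p x = 0 ∨ ind i p x = 1) ∧
      (∀ (x : Fin (n 0) → ℝ) (i : Fin (n (L+1))),
        mlpF n W L x i = ∑ p : Fin (P i), ω i p * (ind i p x * x (r i p))) := by
  choose P r ind ω h1 h2 using rep_mlp n W L
  exact ⟨P, r, ind, ω, fun i p x => h1 i p x, fun x i => h2 i x⟩
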